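/- arXiv:2509.02279 — 2 statements merged into one kernel-verified Lean document; each statement's English description precedes it below -/
import Mathlib

section
/- Let X be a finite set, D a probability distribution on X × {0,1} with random pair (x, y), and p : X → [0,1] a predictor. Consider the decision task T2 = (A, u) with action set A = [0,1] and quadratic payoff u(a, y) = 1 − (a − y)², whose best-response function is the identity σ_{T2}(v) = v. Then CFDL_{T2}(p, D) = ECE₂(p, D)². -/
open scoped Classical
open Finset Set

noncomputable section

/-- `D` is a probability distribution on `X × {0,1}` (labels as `Bool`). -/
def IsDistribution {X : Type} [Fintype X] (D : X × Bool → ℝ) : Prop :=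
  (∀ z, 0 ≤ D z) ∧ (∑ z : X × Bool, D z) = 1

/-- A predictor takes values in `[0,1]`. -/
def IsPredictor {X : Type} (p : X → ℝ) : Prop := ∀ x, p x ∈ Set.Icc (0 : ℝ) 1

/-- Numerical value of a Boolean label. -/
def yval (y : Bool) : ℝ := if y then 1 else 0

/-- Marginal mass of a point `x`. -/
def massx {X : Type} (D : X × Bool → ℝ) (x : X) : ℝ := D (x, false) + D (x, true)

/-- Expectation of `f(x, y)` under `D`. -/
def expval {X : Type} [Fintype X] (D : X × Bool → ℝ) (f : X × Bool → ℝ) : ℝ :=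
  ∑ z : X × Bool, D z * f z

/-- The recalibration `p̂(x) = E[y | p(x)]`. -/
def phat {X : Type} [Fintype X] (D : X × Bool → ℝ) (p : X → ℝ) (x : X) : ℝ :=
  (∑ x' : X, if p x' = p x then D (x', true) else 0) /
    (∑ x' : X, if p x' = p x then massx D x' else 0)

/-- `ECE₂(p, D) = (E[(E[y | p(x)] - p(x))²])^{1/2}`. -/
def ECE2 {X : Type} [Fintype X] (D : X × Bool → ℝ) (p : X → ℝ) : ℝ :=
  Real.sqrt (∑ x : X, massx D x * (phat D p x - p x) ^ 2)

/-- `σT` is a best-response function for the decision task `(A, u)`. -/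
def IsBestResponse {A : Type} (u : A → Bool → ℝ) (σT : ℝ → A) : Prop :=
  ∀ v ∈ Set.Icc (0 : ℝ) 1, ∀ a : A,
    v * u a true + (1 - v) * u a false ≤ v * u (σT v) true + (1 - v) * u (σT v) false

/-- The expected payoff `E[u(σ(p(x)), y)]`. -/
def payoff {X A : Type} [Fintype X] (D : X × Bool → ℝ) (p : X → ℝ)
    (u : A → Bool → ℝ) (σ : ℝ → A) : ℝ :=
  expval D (fun z => u (σ (p z.1)) z.2)

/-- `CFDL_T(p, D) = max_σ E[u(σ(p(x)), y)] - E[u(σT(p(x)), y)]`. -/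
def CFDL {X A : Type} [Fintype X] (D : X × Bool → ℝ) (p : X → ℝ)
    (u : A → Bool → ℝ) (σT : ℝ → A) : ℝ :=
  sSup {e : ℝ | ∃ σ : ℝ → A, e = payoff D p u σ} - payoff D p u σT

/-- The quadratic payoff `u(a, y) = 1 - (a - y)²` on the action set `A = [0,1]`. -/
def uQuad : (Set.Icc (0 : ℝ) 1) → Bool → ℝ := fun a y => 1 - ((a : ℝ) - yval y) ^ 2

/-- The identity best-response function for the quadratic task (`σ_{T2}(v) = v`
for `v ∈ [0,1]`). -/
def σQuad : ℝ → (Set.Icc (0 : ℝ) 1) := fun v => Set.projIcc 0 1 zero_le_one v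

/-!
Write `p̂ = E[y | p(x)]`. Since `y - p̂` is orthogonal to every function of `p(x)`, the square
loss of a post-processing `a(p(x))` splits as `E[(a - y)²] = E[(p̂ - y)²] + E[(a - p̂)²]`.
Hence `σ = p̂` maximises the quadratic payoff (it takes values in `[0,1]`), every `σ` falls
short of it by `E[(σ(p) - p̂)²]`, and for the identity this shortfall is `ECE₂(p, D)²`.
-/

section FiberRatio

variable {X β : Type*} [Fintype X] [DecidableEq β]

/-- For `0 ≤ g ≤ f` this is the conditional mean of `g / f` given `k = v`; it is `0` on an
`f`-null fibre. -/
def fiberRatio (k : X → β) (f g : X → ℝ) (v : β) : ℝ :=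
  (∑ x with k x = v, g x) / ∑ x with k x = v, f x

theorem fiberRatio_mem_Icc (k : X → β) {f g : X → ℝ} (hg : 0 ≤ g) (hgf : g ≤ f) (v : β) :
    fiberRatio k f g v ∈ Set.Icc 0 1 :=
  ⟨div_nonneg (sum_nonneg fun x _ => hg x) (sum_nonneg fun x _ => (hg x).trans (hgf x)),
    div_le_one_of_le₀ (sum_le_sum fun x _ => hgf x)
      (sum_nonneg fun x _ => (hg x).trans (hgf x))⟩

theorem sum_mul_fiberRatio_sub_mul_eq_zero (k : X → β) {f g : X → ℝ} (hg : 0 ≤ g)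
    (hgf : g ≤ f) (c : β → ℝ) :
    ∑ x, (f x * fiberRatio k f g (k x) - g x) * c (k x) = 0 := by
  rw [← sum_fiberwise_of_maps_to (g := k) (t := univ.image k) fun x _ => mem_image_of_mem k
    (mem_univ x)]
  refine sum_eq_zero fun v _ => ?_
  have hfiber : ∑ x with k x = v, (f x * fiberRatio k f g (k x) - g x) * c (k x) =
      ((∑ x with k x = v, f x) * fiberRatio k f g v - ∑ x with k x = v, g x) * c v := by
    rw [sub_mul, sum_mul, sum_mul, sum_mul, ← sum_sub_distrib]
    refine sum_congr rfl fun x hx => ?_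
    rw [(mem_filter.1 hx).2]; ring
  rw [hfiber, fiberRatio]
  rcases eq_or_ne (∑ x with k x = v, f x) 0 with hf | hf
  · have hg0 : ∑ x with k x = v, g x = 0 :=
      le_antisymm (hf ▸ sum_le_sum fun x _ => hgf x) (sum_nonneg fun x _ => hg x)
    simp [hf, hg0]
  · rw [mul_div_cancel₀ _ hf, sub_self, zero_mul]

end FiberRatio

section Recalibration

variable {X : Type} {D : X × Bool → ℝ}

theorem apply_true_le_massx (hD : 0 ≤ D) (x : X) : D (x, true) ≤ massx D x :=
  le_add_of_nonneg_left (hD (x, false))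

theorem massx_nonneg (hD : 0 ≤ D) (x : X) : 0 ≤ massx D x :=
  add_nonneg (hD (x, false)) (hD (x, true))

theorem sum_massx_mul_sq_nonneg [Fintype X] (hD : 0 ≤ D) (a : X → ℝ) :
    0 ≤ ∑ x, massx D x * a x ^ 2 :=
  sum_nonneg fun x _ => mul_nonneg (massx_nonneg hD x) (sq_nonneg _)

variable [Fintype X]

theorem phat_eq_fiberRatio (D : X × Bool → ℝ) (p : X → ℝ) (x : X) :
    phat D p x = fiberRatio p (massx D) (fun x => D (x, true)) (p x) := by
  simp only [phat, fiberRatio, sum_filter]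

theorem sum_massx_mul_phat_sub_mul_eq_zero (hD : 0 ≤ D) (p : X → ℝ) (c : ℝ → ℝ) :
    ∑ x, (massx D x * phat D p x - D (x, true)) * c (p x) = 0 := by
  simpa only [phat_eq_fiberRatio] using sum_mul_fiberRatio_sub_mul_eq_zero p
    (fun x => hD (x, true)) (apply_true_le_massx hD) c

theorem sum_mul_sub_yval_sq (hD : 0 ≤ D) (p : X → ℝ) (c : ℝ → ℝ) :
    ∑ z, D z * (c (p z.1) - yval z.2) ^ 2 =
      ∑ z, D z * (phat D p z.1 - yval z.2) ^ 2 + ∑ x, massx D x * (c (p x) - phat D p x) ^ 2 := by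
  have hcross := sum_massx_mul_phat_sub_mul_eq_zero hD p
    fun v => c v - fiberRatio p (massx D) (fun x => D (x, true)) v
  simp only [← phat_eq_fiberRatio] at hcross
  rw [← sub_eq_iff_eq_add', Fintype.sum_prod_type, Fintype.sum_prod_type, ← sum_sub_distrib,
    ← sub_eq_zero, ← sum_sub_distrib, ← mul_zero 2, ← hcross, mul_sum]
  refine sum_congr rfl fun x _ => ?_
  simp only [Fintype.sum_bool, yval, massx, if_true, Bool.false_eq_true, if_false]
  ring

def recalibratedAction (D : X × Bool → ℝ) (p : X → ℝ) : ℝ → Set.Icc (0 : ℝ) 1 :=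
  fun v => Set.projIcc 0 1 zero_le_one (fiberRatio p (massx D) (fun x => D (x, true)) v)

theorem recalibratedAction_apply (hD : 0 ≤ D) (p : X → ℝ) (x : X) :
    (recalibratedAction D p (p x) : ℝ) = phat D p x := by
  rw [recalibratedAction, phat_eq_fiberRatio, Set.projIcc_of_mem _
    (fiberRatio_mem_Icc p (fun x => hD (x, true)) (apply_true_le_massx hD) _)]

theorem payoff_uQuad (hD : 0 ≤ D) (p : X → ℝ) (σ : ℝ → Set.Icc (0 : ℝ) 1) :
    payoff D p uQuad σ = ∑ z, D z * (1 - (phat D p z.1 - yval z.2) ^ 2) -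
      ∑ x, massx D x * ((σ (p x) : ℝ) - phat D p x) ^ 2 := by
  have := sum_mul_sub_yval_sq hD p (fun v => (σ v : ℝ))
  simp only [payoff, expval, uQuad, mul_sub, mul_one, sum_sub_distrib] at this ⊢
  linarith

theorem payoff_recalibratedAction_sub_payoff_uQuad (hD : 0 ≤ D) (p : X → ℝ)
    (σ : ℝ → Set.Icc (0 : ℝ) 1) :
    payoff D p uQuad (recalibratedAction D p) - payoff D p uQuad σ =
      ∑ x, massx D x * ((σ (p x) : ℝ) - phat D p x) ^ 2 := by
  simp [payoff_uQuad hD, recalibratedAction_apply hD]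

end Recalibration

theorem CFDL_eq_of_forall_payoff_le {X A : Type} [Fintype X] {D : X × Bool → ℝ} {p : X → ℝ}
    {u : A → Bool → ℝ} (σT σ₀ : ℝ → A) (hσ₀ : ∀ σ, payoff D p u σ ≤ payoff D p u σ₀) :
    CFDL D p u σT = payoff D p u σ₀ - payoff D p u σT := by
  have hmax : IsGreatest {e : ℝ | ∃ σ : ℝ → A, e = payoff D p u σ} (payoff D p u σ₀) :=
    ⟨⟨σ₀, rfl⟩, by rintro _ ⟨σ, rfl⟩; exact hσ₀ σ⟩
  rw [CFDL, hmax.csSup_eq]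

theorem σQuad_of_mem {v : ℝ} (hv : v ∈ Set.Icc (0 : ℝ) 1) : (σQuad v : ℝ) = v := by
  rw [σQuad, Set.projIcc_of_mem _ hv]

theorem isBestResponse_uQuad_σQuad : IsBestResponse uQuad σQuad := by
  intro v hv a
  simp only [uQuad, yval, σQuad_of_mem hv, if_true, Bool.false_eq_true, if_false]
  nlinarith [sq_nonneg ((a : ℝ) - v)]

/-- for the decision task `T2` with action set `[0,1]` and quadratic
payoff `u(a,y) = 1 - (a - y)²`, the identity is the best-response function, and
`CFDL_{T2}(p, D) = ECE₂(p, D)²`. -/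
theorem cfdl_quadratic_eq_ece2_sq
    {X : Type} [Fintype X] (D : X × Bool → ℝ) (hD : IsDistribution D)
    (p : X → ℝ) (hp : IsPredictor p) :
    IsBestResponse uQuad σQuad ∧ (∀ v ∈ Set.Icc (0 : ℝ) 1, (σQuad v : ℝ) = v) ∧
      CFDL D p uQuad σQuad = ECE2 D p ^ 2 := by
  refine ⟨isBestResponse_uQuad_σQuad, fun v hv => σQuad_of_mem hv, ?_⟩
  have hregret := payoff_recalibratedAction_sub_payoff_uQuad hD.1 p
  have hopt σ : payoff D p uQuad σ ≤ payoff D p uQuad (recalibratedAction D p) :=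
    sub_nonneg.1 <| hregret σ ▸ sum_massx_mul_sq_nonneg hD.1 _
  rw [CFDL_eq_of_forall_payoff_le _ _ hopt, hregret, ECE2,
    Real.sq_sqrt (sum_massx_mul_sq_nonneg hD.1 _)]
  simp only [σQuad_of_mem (hp _), sub_sq_comm]
end
end

section
/- For any decision task T = (A, u) with best-response function σ_T, there exists a convex function φ : [0,1] → ℝ together with a subgradient ∇φ : [0,1] → ℝ of φ such that u(σ_T(v), y) = φ(v) + ∇φ(v) · (y − v) for every v ∈ [0,1] and y ∈ {0,1}. -/
open scoped Classical
open Set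

noncomputable section

/-- `g` is a subgradient of `φ` on `[0,1]`:
`φ(w) ≥ φ(v) + g(v)·(w - v)` for all `v, w ∈ [0,1]`. -/
def IsSubgradientOn (φ g : ℝ → ℝ) : Prop :=
  ∀ v ∈ Set.Icc (0 : ℝ) 1, ∀ w ∈ Set.Icc (0 : ℝ) 1, φ v + g v * (w - v) ≤ φ w

/-- characterization of proper scoring rules: for any decision task
`T = (A, u)` with best-response function `σT`, there is a convex function
`φ : [0,1] → ℝ` with a subgradient `∇φ` such that
`u(σT(v), y) = φ(v) + ∇φ(v)·(y - v)` for every `v ∈ [0,1]` and `y ∈ {0,1}`. -/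
theorem best_response_payoff_eq_convex_plus_subgradient
    (A : Type) (u : A → Bool → ℝ) (σT : ℝ → A) (hBR : IsBestResponse u σT) :
    ∃ φ g : ℝ → ℝ, ConvexOn ℝ (Set.Icc (0 : ℝ) 1) φ ∧ IsSubgradientOn φ g ∧
      ∀ v ∈ Set.Icc (0 : ℝ) 1, ∀ y : Bool,
        u (σT v) y = φ v + g v * (yval y - v) := by
  set φ : ℝ → ℝ := fun v => v * u (σT v) true + (1 - v) * u (σT v) false with hφ
  set g : ℝ → ℝ := fun v => u (σT v) true - u (σT v) false with hg
  have key : ∀ v ∈ Set.Icc (0:ℝ) 1, ∀ w ∈ Set.Icc (0:ℝ) 1,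
      φ v + g v * (w - v) ≤ φ w := by
    intro v hv w hw
    have := hBR w hw (σT v)
    simp only [hφ, hg]
    nlinarith [this]
  refine ⟨φ, g, ?_, key, ?_⟩
  · refine ⟨convex_Icc 0 1, ?_⟩
    intro x hx y hy a b ha hb hab
    have hz : a • x + b • y ∈ Set.Icc (0:ℝ) 1 := (convex_Icc 0 1) hx hy ha hb hab
    have h1 := hBR x hx (σT (a • x + b • y))
    have h2 := hBR y hy (σT (a • x + b • y))
    simp only [smul_eq_mul] at h1 h2
    simp only [hφ, smul_eq_mul]
    have hb' : b = 1 - a := by linarith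
    subst hb'
    nlinarith [mul_le_mul_of_nonneg_left h1 ha, mul_le_mul_of_nonneg_left h2 hb]
  · intro v hv y
    cases y <;> simp only [hφ, hg, yval] <;> ring_nf <;> simp
end
end
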